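/- arXiv:1806.05854 — 2 statements merged into one kernel-verified Lean document; each statement's English description precedes it below -/
import Mathlib

section
/- Let A and B be unital C*-algebras with A commutative. Then every state on the minimal C*-tensor product A ⊗ B is separable. -/
open scoped ComplexOrder TensorProduct

/-- A state on a unital C*-algebra, as an element of the weak-* dual. -/
def IsState {A : Type*} [CStarAlgebra A] (φ : WeakDual ℂ A) : Prop :=
  φ 1 = 1 ∧ ∀ a : A, 0 ≤ φ (star a * a)

/-- A realization of the minimal (injective) C*-tensor product of unital C*-algebras
`A` and `B` as a C*-algebra `T`. -/
structure MinCStarTensor (A B T : Type*) [CStarAlgebra A] [CStarAlgebra B]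
    [CStarAlgebra T] where
  ι : (A ⊗[ℂ] B) →ₗ[ℂ] T
  inj : Function.Injective ι
  map_mul' : ∀ (a a' : A) (b b' : B),
    ι (a ⊗ₜ[ℂ] b) * ι (a' ⊗ₜ[ℂ] b') = ι ((a * a') ⊗ₜ[ℂ] (b * b'))
  map_star' : ∀ (a : A) (b : B), star (ι (a ⊗ₜ[ℂ] b)) = ι (star a ⊗ₜ[ℂ] star b)
  map_one' : ι ((1 : A) ⊗ₜ[ℂ] (1 : B)) = 1
  dense : DenseRange ι
  min : ∀ (C : Type*) [CStarAlgebra C] (θ : (A ⊗[ℂ] B) →ₗ[ℂ] C),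
    (∀ (a a' : A) (b b' : B),
      θ (a ⊗ₜ[ℂ] b) * θ (a' ⊗ₜ[ℂ] b') = θ ((a * a') ⊗ₜ[ℂ] (b * b'))) →
    (∀ (a : A) (b : B), star (θ (a ⊗ₜ[ℂ] b)) = θ (star a ⊗ₜ[ℂ] star b)) →
    Function.Injective θ → ∀ z : A ⊗[ℂ] B, ‖ι z‖ ≤ ‖θ z‖

/-- The state space of a unital C*-algebra with the weak-* topology. -/
def States (A : Type*) [CStarAlgebra A] : Type _ := {φ : WeakDual ℂ A // IsState φ}

noncomputable instance {A : Type*} [CStarAlgebra A] : TopologicalSpace (States A) :=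
  instTopologicalSpaceSubtype


/-- The set of product states on the tensor product `T`. -/
def prodStates {A B T : Type*} [CStarAlgebra A] [CStarAlgebra B] [CStarAlgebra T]
    (τ : MinCStarTensor A B T) : Set (WeakDual ℂ T) :=
  {ω | ∃ (φ : WeakDual ℂ A) (ψ : WeakDual ℂ B), IsState φ ∧ IsState ψ ∧
    ∀ (a : A) (b : B), ω (τ.ι (a ⊗ₜ[ℂ] b)) = φ a * ψ b}

/-- A separable state: an element of the weak-* closed convex hull of product states. -/
def IsSepState {A B T : Type*} [CStarAlgebra A] [CStarAlgebra B] [CStarAlgebra T]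
    (τ : MinCStarTensor A B T) (ω : WeakDual ℂ T) : Prop :=
  ω ∈ closure (convexHull ℝ (prodStates τ))

open scoped CStarAlgebra

/-! By Krein–Milman the state space of `T` is the weak-* closed convex hull of its extreme
points, so it suffices that every pure state `ω` is a product state. Commutativity of `A`
makes `a ↦ ι (a ⊗ 1)` land in the centre of `T`. For a central `0 ≤ c ≤ 1` the pure state
splits as `ω (c ·) + ω ((1 - c) ·)` into positive functionals, and purity forces
`ω (c x) = ω c * ω x`. As `A` is spanned by its positive contractions, this gives
`ω (ι (a ⊗ b)) = ω (ι (a ⊗ 1)) * ω (ι (1 ⊗ b))`. -/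

section PositiveFunctional

variable {T : Type*} [CStarAlgebra T]

def IsPositiveFunctional (φ : WeakDual ℂ T) : Prop :=
  ∀ a : T, 0 ≤ φ (star a * a)

lemma IsState.isPositiveFunctional {φ : WeakDual ℂ T} (hφ : IsState φ) :
    IsPositiveFunctional φ :=
  hφ.2

lemma IsPositiveFunctional.add {φ ψ : WeakDual ℂ T} (hφ : IsPositiveFunctional φ)
    (hψ : IsPositiveFunctional ψ) : IsPositiveFunctional (φ + ψ) :=
  fun a ↦ add_nonneg (hφ a) (hψ a)

lemma IsPositiveFunctional.smul {φ : WeakDual ℂ T} (hφ : IsPositiveFunctional φ) {r : ℝ}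
    (hr : 0 ≤ r) : IsPositiveFunctional (r • φ) := fun a ↦ by
  change 0 ≤ (r : ℂ) * φ (star a * a)
  exact mul_nonneg (by exact_mod_cast hr) (hφ a)

variable [PartialOrder T] [StarOrderedRing T]

lemma IsPositiveFunctional.map_nonneg {φ : WeakDual ℂ T} (hφ : IsPositiveFunctional φ) {x : T}
    (hx : 0 ≤ x) : 0 ≤ φ x := by
  obtain ⟨a, rfl⟩ := CStarAlgebra.nonneg_iff_eq_star_mul_self.mp hx
  exact hφ a

noncomputable def IsPositiveFunctional.toPositiveLinearMap {φ : WeakDual ℂ T}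
    (hφ : IsPositiveFunctional φ) : T →ₚ[ℂ] ℂ :=
  .mk₀ (WeakDual.toStrongDual φ : T →ₗ[ℂ] ℂ) fun _ ↦ hφ.map_nonneg

lemma IsPositiveFunctional.norm_apply_le {φ : WeakDual ℂ T} (hφ : IsPositiveFunctional φ)
    (x : T) : ‖φ x‖ ≤ 4 * ‖φ 1‖ * ‖x‖ := by
  obtain ⟨y, hy_nonneg, hy_norm, rfl⟩ := CStarAlgebra.exists_sum_four_nonneg x
  calc ‖φ (∑ i : Fin 4, Complex.I ^ (i : ℕ) • y i)‖
      ≤ ∑ i : Fin 4, ‖φ (y i)‖ := by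
        rw [map_sum]
        refine (norm_sum_le _ _).trans_eq ?_
        simp
    _ ≤ ∑ _i : Fin 4, ‖φ 1‖ * ‖∑ i : Fin 4, Complex.I ^ (i : ℕ) • y i‖ := by
        gcongr with i
        exact (hφ.toPositiveLinearMap.norm_apply_le_of_nonneg _ (hy_nonneg i)).trans
          (mul_le_mul_of_nonneg_left (hy_norm i) (norm_nonneg _))
    _ = 4 * ‖φ 1‖ * ‖∑ i : Fin 4, Complex.I ^ (i : ℕ) • y i‖ := by simp [mul_assoc]

lemma IsPositiveFunctional.eq_zero_of_apply_one {φ : WeakDual ℂ T}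
    (hφ : IsPositiveFunctional φ) (h1 : φ 1 = 0) : φ = 0 :=
  DFunLike.ext _ _ fun x ↦ norm_le_zero_iff.mp <| by simpa [h1] using hφ.norm_apply_le x

lemma IsState.norm_apply_le {φ : WeakDual ℂ T} (hφ : IsState φ) (x : T) :
    ‖φ x‖ ≤ 4 * ‖x‖ := by
  simpa [hφ.1] using hφ.isPositiveFunctional.norm_apply_le x

end PositiveFunctional

section StateSpace

variable {T : Type*} [CStarAlgebra T]

lemma isClosed_setOf_isState : IsClosed {φ : WeakDual ℂ T | IsState φ} := by
  have hdecomp : {φ : WeakDual ℂ T | IsState φ} =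
      {φ | φ 1 = 1} ∩ ⋂ a : T, {φ | 0 ≤ φ (star a * a)} := by
    ext; simp [IsState]
  rw [hdecomp]
  exact (isClosed_eq (WeakDual.eval_continuous 1) continuous_const).inter <|
    isClosed_iInter fun a ↦ isClosed_Ici.preimage (WeakDual.eval_continuous _)

lemma convex_setOf_isState : Convex ℝ {φ : WeakDual ℂ T | IsState φ} := by
  intro φ hφ ψ hψ r s hr hs hrs
  refine ⟨?_, (hφ.isPositiveFunctional.smul hr).add (hψ.isPositiveFunctional.smul hs)⟩
  change (r : ℂ) * φ 1 + (s : ℂ) * ψ 1 = 1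
  rw [hφ.1, hψ.1]
  exact_mod_cast by simpa using hrs

lemma isCompact_setOf_isState [PartialOrder T] [StarOrderedRing T] :
    IsCompact {φ : WeakDual ℂ T | IsState φ} := by
  refine WeakDual.isCompact_of_bounded_of_closed ?_ isClosed_setOf_isState
  refine (Metric.isBounded_closedBall (x := (0 : StrongDual ℂ T)) (r := 4)).subset
    fun φ hφ ↦ ?_
  simpa using ContinuousLinearMap.opNorm_le_bound _ (by norm_num) (IsState.norm_apply_le hφ)

end StateSpace

section ExtremeStates

variable {T : Type*} [CStarAlgebra T]

noncomputable def WeakDual.mulLeft (c : T) (ω : WeakDual ℂ T) : WeakDual ℂ T :=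
  StrongDual.toWeakDual ((WeakDual.toStrongDual ω).comp (ContinuousLinearMap.mul ℂ T c))

@[simp] lemma WeakDual.mulLeft_apply (c : T) (ω : WeakDual ℂ T) (x : T) :
    ω.mulLeft c x = ω (c * x) :=
  rfl

lemma IsPositiveFunctional.isState_inv_smul {φ : WeakDual ℂ T} (hφ : IsPositiveFunctional φ)
    {r : ℝ} (hr : 0 < r) (hφ1 : φ 1 = r) : IsState (r⁻¹ • φ) := by
  refine ⟨?_, hφ.smul (inv_nonneg.mpr hr.le)⟩
  change ((r⁻¹ : ℝ) : ℂ) * φ 1 = 1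
  rw [hφ1, ← Complex.ofReal_mul, inv_mul_cancel₀ hr.ne', Complex.ofReal_one]

variable [PartialOrder T] [StarOrderedRing T]

lemma IsPositiveFunctional.mulLeft {ω : WeakDual ℂ T} (hω : IsPositiveFunctional ω) {c : T}
    (hc : c ∈ Subalgebra.center ℂ T) (hc0 : 0 ≤ c) : IsPositiveFunctional (ω.mulLeft c) :=
  fun a ↦ by
    rw [WeakDual.mulLeft_apply, ← mul_assoc, ← Subalgebra.mem_center_iff.mp hc (star a)]
    exact hω.map_nonneg (star_left_conjugate_nonneg hc0 a)

lemma apply_eq_mul_of_add_eq_of_mem_extremePoints {ω f g : WeakDual ℂ T}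
    (hω : ω ∈ Set.extremePoints ℝ {φ | IsState φ}) (hf : IsPositiveFunctional f)
    (hg : IsPositiveFunctional g) (hfg : f + g = ω) (x : T) : f x = f 1 * ω x := by
  obtain ⟨hωS, hωext⟩ := hω
  obtain ⟨r, hr0, hfr⟩ : ∃ r : ℝ, 0 ≤ r ∧ (r : ℂ) = f 1 :=
    RCLike.nonneg_iff_exists_ofReal.mp (by simpa using hf 1)
  have hgr : g 1 = (1 - r : ℝ) := by
    have h : f 1 + g 1 = 1 := hωS.1 ▸ DFunLike.congr_fun hfg 1
    push_cast
    linear_combination h + hfr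
  have hr1 : r ≤ 1 := by
    have := (by simpa using hg 1 : 0 ≤ g 1)
    rw [hgr] at this
    linarith [Complex.zero_le_real.mp this]
  rcases hr0.eq_or_lt with rfl | hr0
  · have hf0 := hf.eq_zero_of_apply_one (by simpa using hfr.symm)
    rw [DFunLike.congr_fun hf0 x, ← hfr, Complex.ofReal_zero, zero_mul]
    rfl
  rcases hr1.eq_or_lt with rfl | hr1
  · have hg0 : g = 0 := hg.eq_zero_of_apply_one (by simpa using hgr)
    simp [← hfg, hg0, ← hfr]
  have hseg : ω ∈ openSegment ℝ (r⁻¹ • f) ((1 - r)⁻¹ • g) :=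
    ⟨r, 1 - r, hr0, by linarith, by ring, (congrArg₂ (· + ·) (smul_inv_smul₀ hr0.ne' f)
      (smul_inv_smul₀ (sub_ne_zero.mpr hr1.ne') g)).trans hfg⟩
  have hfω := hωext (hf.isState_inv_smul hr0 hfr.symm)
    (hg.isState_inv_smul (by linarith) hgr) hseg
  rw [← hfω, ← hfr]
  change f x = r * ((r⁻¹ : ℝ) * f x)
  rw [← mul_assoc, ← Complex.ofReal_mul, mul_inv_cancel₀ hr0.ne', Complex.ofReal_one, one_mul]

lemma apply_mul_eq_of_mem_extremePoints {ω : WeakDual ℂ T}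
    (hω : ω ∈ Set.extremePoints ℝ {φ | IsState φ}) {c : T} (hc : c ∈ Subalgebra.center ℂ T)
    (hc0 : 0 ≤ c) (hc1 : c ≤ 1) (x : T) : ω (c * x) = ω c * ω x := by
  have hpos := hω.1.isPositiveFunctional
  have hsum : ω.mulLeft c + ω.mulLeft (1 - c) = ω := by
    refine DFunLike.ext _ _ fun y ↦ ?_
    change ω (c * y) + ω ((1 - c) * y) = ω y
    rw [← map_add, ← add_mul, add_sub_cancel, one_mul]
  simpa using apply_eq_mul_of_add_eq_of_mem_extremePoints hω (hpos.mulLeft hc hc0)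
    (hpos.mulLeft (sub_mem (one_mem _) hc) (sub_nonneg.mpr hc1)) hsum x

end ExtremeStates

section CentralStarAlgHom

variable {A T : Type*} [CStarAlgebra A] [CStarAlgebra T]

noncomputable def WeakDual.compStarAlgHom (ω : WeakDual ℂ T) (π : A →⋆ₐ[ℂ] T) :
    WeakDual ℂ A :=
  StrongDual.toWeakDual ((WeakDual.toStrongDual ω).comp ⟨π.toLinearMap, map_continuous π⟩)

@[simp] lemma WeakDual.compStarAlgHom_apply (ω : WeakDual ℂ T) (π : A →⋆ₐ[ℂ] T) (a : A) :
    ω.compStarAlgHom π a = ω (π a) :=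
  rfl

lemma IsState.compStarAlgHom {ω : WeakDual ℂ T} (hω : IsState ω) (π : A →⋆ₐ[ℂ] T) :
    IsState (ω.compStarAlgHom π) :=
  ⟨by simpa using hω.1, fun a ↦ by
    simpa only [WeakDual.compStarAlgHom_apply, map_mul, map_star] using hω.2 (π a)⟩

variable [PartialOrder A] [StarOrderedRing A] [PartialOrder T] [StarOrderedRing T]

lemma apply_map_mul_eq_of_mem_extremePoints {ω : WeakDual ℂ T}
    (hω : ω ∈ Set.extremePoints ℝ {φ | IsState φ}) (π : A →⋆ₐ[ℂ] T)
    (hπ : ∀ a, π a ∈ Subalgebra.center ℂ T) (a : A) (x : T) :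
    ω (π a * x) = ω (π a) * ω x := by
  have hspan : a ∈ Submodule.span ℂ ({y : A | 0 ≤ y} ∩ Metric.closedBall 0 1) := by
    simp [CStarAlgebra.span_nonneg_inter_unitClosedBall]
  induction hspan using Submodule.span_induction with
  | mem y hy =>
    have hy1 : y ≤ 1 := (CStarAlgebra.norm_le_one_iff_of_nonneg y hy.1).mp (by simpa using hy.2)
    exact apply_mul_eq_of_mem_extremePoints hω (hπ y) (map_nonneg π hy.1)
      (by simpa using OrderHomClass.mono π hy1) x
  | zero => simp
  | add y z _ _ hy hz => simp [add_mul, hy, hz]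
  | smul c y _ hy => simp [hy, mul_assoc]

end CentralStarAlgHom

namespace MinCStarTensor

variable {A B T : Type*} [CStarAlgebra A] [CStarAlgebra B] [CStarAlgebra T]
  (τ : MinCStarTensor A B T)

noncomputable def includeLeft : A →⋆ₐ[ℂ] T where
  toFun a := τ.ι (a ⊗ₜ 1)
  map_one' := τ.map_one'
  map_mul' a a' := by rw [τ.map_mul', mul_one]
  map_zero' := by simp
  map_add' a a' := by rw [TensorProduct.add_tmul, map_add]
  commutes' r := by
    rw [Algebra.algebraMap_eq_smul_one, ← TensorProduct.smul_tmul', map_smul, τ.map_one',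
      Algebra.algebraMap_eq_smul_one]
  map_star' a := by rw [τ.map_star', star_one]

noncomputable def includeRight : B →⋆ₐ[ℂ] T where
  toFun b := τ.ι (1 ⊗ₜ b)
  map_one' := τ.map_one'
  map_mul' b b' := by rw [τ.map_mul', mul_one]
  map_zero' := by simp
  map_add' b b' := by rw [TensorProduct.tmul_add, map_add]
  commutes' r := by
    rw [Algebra.algebraMap_eq_smul_one, TensorProduct.tmul_smul, map_smul, τ.map_one',
      Algebra.algebraMap_eq_smul_one]
  map_star' b := by rw [τ.map_star', star_one]

@[simp] lemma includeLeft_apply (a : A) : τ.includeLeft a = τ.ι (a ⊗ₜ 1) := rfl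

@[simp] lemma includeRight_apply (b : B) : τ.includeRight b = τ.ι (1 ⊗ₜ b) := rfl

lemma includeLeft_mul_includeRight (a : A) (b : B) :
    τ.includeLeft a * τ.includeRight b = τ.ι (a ⊗ₜ b) := by
  simp [τ.map_mul']

lemma includeLeft_mem_center (hcomm : ∀ a b : A, a * b = b * a) (a : A) :
    τ.includeLeft a ∈ Subalgebra.center ℂ T := by
  refine Subalgebra.mem_center_iff.mpr fun t ↦ τ.dense.induction_on t
    (isClosed_eq (continuous_mul_const _) (continuous_const_mul _)) fun z ↦ ?_
  induction z using TensorProduct.induction_on with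
  | zero => simp
  | tmul a' b => simp [τ.map_mul', hcomm a']
  | add z w hz hw => rw [map_add, add_mul, mul_add, hz, hw]

lemma mem_prodStates_of_mem_extremePoints [PartialOrder A] [StarOrderedRing A] [PartialOrder T]
    [StarOrderedRing T] (hcomm : ∀ a b : A, a * b = b * a) {ω : WeakDual ℂ T}
    (hω : ω ∈ Set.extremePoints ℝ {φ | IsState φ}) : ω ∈ prodStates τ :=
  ⟨ω.compStarAlgHom τ.includeLeft, ω.compStarAlgHom τ.includeRight,
    hω.1.compStarAlgHom _, hω.1.compStarAlgHom _, fun a b ↦ by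
      rw [← includeLeft_mul_includeRight]
      exact apply_map_mul_eq_of_mem_extremePoints hω _ (τ.includeLeft_mem_center hcomm) a _⟩

end MinCStarTensor

/-- If `A` is commutative, then every state on the minimal C*-tensor product `A ⊗ B`
is separable. -/
theorem state_sep_of_comm {A B T : Type*} [CStarAlgebra A] [CStarAlgebra B]
    [CStarAlgebra T] (hcomm : ∀ a b : A, a * b = b * a)
    (τ : MinCStarTensor A B T) (ω : WeakDual ℂ T) (hω : IsState ω) :
    IsSepState τ ω := by
  let := CStarAlgebra.spectralOrder A
  have := CStarAlgebra.spectralOrderedRing A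
  let := CStarAlgebra.spectralOrder T
  have := CStarAlgebra.spectralOrderedRing T
  have : LocallyConvexSpace ℝ (WeakDual ℂ T) := WeakBilin.locallyConvexSpace
  have hKreinMilman := closure_convexHull_extremePoints (E := WeakDual ℂ T)
    isCompact_setOf_isState convex_setOf_isState
  exact closure_mono (convexHull_mono fun _ ↦ τ.mem_prodStates_of_mem_extremePoints hcomm)
    (hKreinMilman.symm ▸ hω)
end

section
/- Let E be a locally convex Hausdorff topological vector space, K ⊆ E a compact subset, and x ∈ E. Then x lies in the closed convex hull of K if and only if there exists a regular Borel probability measure μ on K whose barycenter is x, i.e., f(x) = ∫_K f dμ for every continuous linear functional f on E. -/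
/-!
The barycenters of probability measures on `K` form a convex set (take convex combinations of
the measures) containing `K` (take Dirac masses). This set is closed: it is the projection to `E`
of the closed set of pairs `(x, μ)` such that `μ` has barycenter `x`, and since the probability
measures on the compact space `K` form a compact space for the weak topology, this projection is a
closed map. The Riesz–Markov–Kakutani theorem then replaces the measure by a regular one with the
same integrals of continuous functions. Conversely, a continuous linear functional separating `x`
from the closed convex hull of `K` would, integrated against `μ`, contradict `f x = ∫ f dμ`.
-/

open MeasureTheory Set

lemma MeasureTheory.Measure.exists_regular_isProbabilityMeasure_integral_eq {X : Type*}
    [TopologicalSpace X] [CompactSpace X] [T2Space X] [MeasurableSpace X] [BorelSpace X]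
    (μ : Measure X) [IsProbabilityMeasure μ] :
    ∃ ν : Measure X, IsProbabilityMeasure ν ∧ ν.Regular ∧
      ∀ g : C(X, ℝ), ∫ x, g x ∂μ = ∫ x, g x ∂ν := by
  obtain ⟨ν, hν_reg, -, hμν⟩ := μ.exists_regular_eq_of_compactSpace
  refine ⟨ν, isProbabilityMeasure_iff_real.2 ?_, hν_reg,
    fun g => hμν (BoundedContinuousFunction.mkOfCompact g)⟩
  simpa using (hμν (BoundedContinuousFunction.const X 1)).symm

section Barycenter

variable {E : Type*} [AddCommGroup E] [Module ℝ E] [TopologicalSpace E] [MeasurableSpace E]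
  {K : Set E}

def HasBarycenter (μ : Measure K) (x : E) : Prop :=
  ∀ f : E →L[ℝ] ℝ, f x = ∫ y : K, f y ∂μ

variable (K) in
def barycenters : Set E := {x | ∃ μ : ProbabilityMeasure K, HasBarycenter (μ : Measure K) x}

variable [OpensMeasurableSpace E]

lemma hasBarycenter_dirac (y : K) : HasBarycenter (Measure.dirac y) (y : E) := fun f =>
  (integral_dirac' _ y (f.continuous.comp continuous_subtype_val).stronglyMeasurable).symm

lemma subset_barycenters : K ⊆ barycenters K := fun y hy =>
  ⟨⟨Measure.dirac ⟨y, hy⟩, inferInstance⟩, hasBarycenter_dirac ⟨y, hy⟩⟩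

lemma integrable_continuousLinearMap_comp_val [CompactSpace K] (μ : Measure K)
    [IsFiniteMeasure μ] (f : E →L[ℝ] ℝ) : Integrable (fun y : K => f y) μ :=
  (f.continuous.comp continuous_subtype_val).integrable_of_hasCompactSupport
    (HasCompactSupport.of_compactSpace _)

lemma HasBarycenter.add_smul [CompactSpace K] {μ ν : Measure K} [IsFiniteMeasure μ]
    [IsFiniteMeasure ν] {x y : E} (hμ : HasBarycenter μ x) (hν : HasBarycenter ν y)
    {a b : ℝ} (ha : 0 ≤ a) (hb : 0 ≤ b) :
    HasBarycenter (ENNReal.ofReal a • μ + ENNReal.ofReal b • ν) (a • x + b • y) := fun f => by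
  rw [integral_add_measure, integral_smul_measure, integral_smul_measure, ENNReal.toReal_ofReal ha,
    ENNReal.toReal_ofReal hb, map_add, map_smul, map_smul, hμ f, hν f]
  exacts [(integrable_continuousLinearMap_comp_val μ f).smul_measure ENNReal.ofReal_ne_top,
    (integrable_continuousLinearMap_comp_val ν f).smul_measure ENNReal.ofReal_ne_top]

lemma convex_barycenters [CompactSpace K] : Convex ℝ (barycenters K) := by
  rintro _ ⟨μ, hμ⟩ _ ⟨ν, hν⟩ a b ha hb hab
  refine ⟨⟨ENNReal.ofReal a • μ + ENNReal.ofReal b • ν, ⟨?_⟩⟩, hμ.add_smul hν ha hb⟩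
  simp [← ENNReal.ofReal_add ha hb, hab]

lemma isClosed_barycenters [CompactSpace K] [T2Space E] [BorelSpace E] :
    IsClosed (barycenters K) := by
  have hproj : barycenters K =
      Prod.fst '' {p : E × ProbabilityMeasure K | HasBarycenter (p.2 : Measure K) p.1} := by
    ext x; simp [barycenters]
  rw [hproj]
  simp only [HasBarycenter, ofPred_forall]
  refine isClosedMap_fst_of_compactSpace _ (isClosed_iInter fun f => isClosed_eq ?_ ?_)
  · fun_prop
  · exact (ProbabilityMeasure.continuous_integral_continuousMap
      ((f : C(E, ℝ)).comp ⟨Subtype.val, continuous_subtype_val⟩)).comp continuous_snd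

lemma closure_convexHull_subset_barycenters [CompactSpace K] [T2Space E] [BorelSpace E] :
    closure (convexHull ℝ K) ⊆ barycenters K :=
  closure_minimal (convexHull_min subset_barycenters convex_barycenters) isClosed_barycenters

lemma mem_closure_convexHull_of_hasBarycenter [IsTopologicalAddGroup E] [ContinuousSMul ℝ E]
    [LocallyConvexSpace ℝ E] [CompactSpace K] {μ : Measure K} [IsProbabilityMeasure μ] {x : E}
    (hx : HasBarycenter μ x) : x ∈ closure (convexHull ℝ K) := by
  by_contra hx'
  obtain ⟨f, u, hfu, hux⟩ := geometric_hahn_banach_closed_point (convex_convexHull ℝ K).closure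
    isClosed_closure hx'
  have hf_le : ∀ y : K, f y ≤ u := fun y =>
    (hfu _ (subset_closure (subset_convexHull ℝ K y.2))).le
  have : f x ≤ u := calc
    f x = ∫ y : K, f y ∂μ := hx f
    _ ≤ ∫ _ : K, u ∂μ :=
      integral_mono (integrable_continuousLinearMap_comp_val μ f) (integrable_const u) hf_le
    _ = u := by simp
  exact this.not_gt hux

end Barycenter

/-- A point `x` of a locally convex Hausdorff space lies in the closed convex hull of a
compact set `K` iff there is a regular Borel probability measure on `K` whose
barycenter is `x`, i.e. `f x = ∫ f dμ` for every continuous linear functional `f`. -/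
theorem mem_closedConvexHull_iff_barycenter {E : Type*} [AddCommGroup E] [Module ℝ E]
    [TopologicalSpace E] [IsTopologicalAddGroup E] [ContinuousSMul ℝ E]
    [LocallyConvexSpace ℝ E] [T2Space E] [MeasurableSpace E] [BorelSpace E]
    (K : Set E) (hK : IsCompact K) (x : E) :
    x ∈ closure (convexHull ℝ K) ↔
      ∃ μ : Measure K, IsProbabilityMeasure μ ∧ μ.Regular ∧
        ∀ f : E →L[ℝ] ℝ, f x = ∫ y : K, f (y : E) ∂μ := by
  have : CompactSpace K := isCompact_iff_compactSpace.1 hK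
  constructor
  · intro hx
    obtain ⟨μ, hμ⟩ := closure_convexHull_subset_barycenters hx
    obtain ⟨ν, hν_prob, hν_reg, hμν⟩ :=
      (μ : Measure K).exists_regular_isProbabilityMeasure_integral_eq
    exact ⟨ν, hν_prob, hν_reg, fun f => (hμ f).trans (hμν ((f : C(E, ℝ)).restrict K))⟩
  · rintro ⟨μ, hμ, -, hx⟩
    exact mem_closure_convexHull_of_hasBarycenter hx
end
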